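/- arXiv:2406.10603 — 5 statements merged into one kernel-verified Lean document; each statement's English description precedes it below -/
import Mathlib

section
/- Let H₁, H₂ be symmetric positive semidefinite n×n real matrices, B ∈ ℝ^{n×n}, and η > 0. The 2n×2n matrix J = [[I, -η·Bᵀ·H₂·B],[η·H₁, I]] satisfies det(J) = det(I + η²·H₁·Bᵀ·H₂·B) ≥ 1. -/
/-!
By the Schur complement, `det J = det (1 + η² H₁ M)` with `M = Bᵀ H₂ B` positive semidefinite.
Writing `η² H₁ = Sᴴ S`, Sylvester's identity `det (1 + X Y) = det (1 + Y X)` turns this into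
`det (1 + S M Sᴴ)`, and `S M Sᴴ` is positive semidefinite, so every eigenvalue of `1 + S M Sᴴ`
is at least `1`.
-/

open Matrix
open scoped MatrixOrder

namespace Matrix

variable {ι : Type*} [Fintype ι] [DecidableEq ι]

theorem PosSemidef.one_le_det_one_add {P : Matrix ι ι ℝ} (hP : P.PosSemidef) :
    1 ≤ det (1 + P) := by
  have hcfc : 1 + P = cfc (fun x : ℝ ↦ 1 + x) P := by
    rw [cfc_add .., cfc_const_one .., cfc_id' ..]
  rw [hcfc, hP.1.cfc_eq]
  simp only [IsHermitian.cfc, RCLike.ofReal_real_eq_id, CompTriple.comp_eq, det_map,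
    det_diagonal, Function.comp_apply]
  exact Finset.one_le_prod fun i _ ↦ by linarith [hP.eigenvalues_nonneg i]

theorem PosSemidef.one_le_det_one_add_mul {A C : Matrix ι ι ℝ} (hA : A.PosSemidef)
    (hC : C.PosSemidef) : 1 ≤ det (1 + A * C) := by
  obtain ⟨S, rfl⟩ := CStarAlgebra.nonneg_iff_eq_star_mul_self.mp hA.nonneg
  rw [Matrix.mul_assoc, det_one_add_mul_comm]
  exact (hC.mul_mul_conjTranspose_same S).one_le_det_one_add

theorem det_fromBlocks_one_neg_one {m n α : Type*} [Fintype m] [DecidableEq m] [Fintype n]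
    [DecidableEq n] [CommRing α] (X : Matrix m n α) (Y : Matrix n m α) :
    det (fromBlocks 1 (-X) Y 1) = det (1 + Y * X) := by
  rw [det_fromBlocks_one₁₁, Matrix.mul_neg, sub_neg_eq_add]

end Matrix

theorem det_block_update_matrix_general (n : ℕ) (H₁ H₂ B : Matrix (Fin n) (Fin n) ℝ)
    (hH₁ : H₁.PosSemidef) (hH₂ : H₂.PosSemidef) (η : ℝ)
    (J : Matrix (Fin n ⊕ Fin n) (Fin n ⊕ Fin n) ℝ)
    (hJ : J = Matrix.fromBlocks 1 (-(η • (B.transpose * H₂ * B))) (η • H₁) 1) :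
    J.det = ((1 : Matrix (Fin n) (Fin n) ℝ) + (η ^ 2) • (H₁ * (B.transpose * H₂ * B))).det ∧
      1 ≤ J.det := by
  have hdet : J.det = det (1 + (η ^ 2) • (H₁ * (Bᵀ * H₂ * B))) := by
    rw [hJ, det_fromBlocks_one_neg_one, smul_mul_smul_comm, sq]
  have hM : (Bᵀ * H₂ * B).PosSemidef := by
    simpa only [conjTranspose_eq_transpose_of_trivial] using hH₂.conjTranspose_mul_mul_same B
  refine ⟨hdet, ?_⟩
  rw [hdet, ← Matrix.smul_mul]
  exact (hH₁.smul (sq_nonneg η)).one_le_det_one_add_mul hM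

/-- For symmetric PSD `H₁, H₂`, any `B` and `η > 0`, the block matrix
`J = [[I, -η Bᵀ H₂ B],[η H₁, I]]` satisfies `det J = det (I + η² H₁ Bᵀ H₂ B) ≥ 1`. -/
theorem det_block_update_matrix (n : ℕ) (H₁ H₂ B : Matrix (Fin n) (Fin n) ℝ)
    (hH₁ : H₁.PosSemidef) (hH₂ : H₂.PosSemidef) (η : ℝ) (hη : 0 < η)
    (J : Matrix (Fin n ⊕ Fin n) (Fin n ⊕ Fin n) ℝ)
    (hJ : J = Matrix.fromBlocks 1 (-(η • (B.transpose * H₂ * B))) (η • H₁) 1) :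
    J.det = ((1 : Matrix (Fin n) (Fin n) ℝ) + (η ^ 2) • (H₁ * (B.transpose * H₂ * B))).det ∧
      1 ≤ J.det :=
  det_block_update_matrix_general n H₁ H₂ B hH₁ hH₂ η J hJ
end

section
/- Let A be a real n×n matrix with all eigenvalues γᵢ ≥ 0 of A·Aᵀ, η > 0, and let M = [[I, -η·A·Aᵀ],[η·I, I]]. Then every eigenvalue μ of M satisfies μ² - 2μ + 1 + μ·η²·γ = 0 for some eigenvalue γ of A·Aᵀ, and hence |μ|² = 1 + γ·η² ≥ 1. -/
/-!
Writing an eigenvector of `M` as `(x, y)`, the two block rows give `η x = (μ - 1) y` and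
`η² (A Aᵀ) y = -(μ - 1)² y` with `y ≠ 0`, so `-(μ - 1)² / η²` is a complex eigenvalue of the
positive semidefinite matrix `A Aᵀ` and hence a real `γ ≥ 0`. Then `μ - 1` squares to the
nonpositive real `-γ η²`, so it is purely imaginary of modulus `√γ η`, and `|μ|² = 1 + γ η²`.
-/

open Matrix
open scoped ComplexOrder

def eulerUpdate {K n : Type*} [Ring K] [DecidableEq n] (η : K) (S : Matrix n n K) :
    Matrix (n ⊕ n) (n ⊕ n) K :=
  fromBlocks 1 (-(η • S)) (η • 1) 1

theorem eulerUpdate_map {K L n : Type*} [Ring K] [Ring L] [DecidableEq n] (f : K →+* L)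
    (η : K) (S : Matrix n n K) : (eulerUpdate η S).map f = eulerUpdate (f η) (S.map f) := by
  simp [eulerUpdate, fromBlocks_map, Matrix.map_neg, map_smul' _ _ _ (map_mul f)]

theorem eulerUpdate_eigenvector_inr {K n : Type*} [Field K] [Fintype n] [DecidableEq n]
    {η μ : K} (hη : η ≠ 0) {S : Matrix n n K} {v : n ⊕ n → K} (hv : v ≠ 0)
    (h : eulerUpdate η S *ᵥ v = μ • v) :
    v ∘ Sum.inr ≠ 0 ∧ S *ᵥ (v ∘ Sum.inr) = (-(μ - 1) ^ 2 / η ^ 2) • (v ∘ Sum.inr) := by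
  obtain ⟨x, y, rfl⟩ : ∃ x y, v = Sum.elim x y := ⟨_, _, (Sum.elim_comp_inl_inr v).symm⟩
  have hμ : μ • Sum.elim x y = Sum.elim (μ • x) (μ • y) := by ext (i | i) <;> rfl
  rw [eulerUpdate, fromBlocks_mulVec, hμ, Sum.elim_eq_iff] at h
  simp only [Sum.elim_comp_inl, Sum.elim_comp_inr, one_mulVec, neg_mulVec, smul_mulVec] at h ⊢
  obtain ⟨hx, hy⟩ := h
  have hxy : η • x = (μ - 1) • y := by
    rw [sub_smul, one_smul, ← hy]; abel
  have hy0 : y ≠ 0 := by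
    rintro rfl
    simp only [smul_zero, smul_eq_zero, hη, false_or] at hxy
    exact hv (by simp [hxy])
  have hSy : η ^ 2 • S *ᵥ y = (-(μ - 1) ^ 2) • y := by
    linear_combination (norm := module) (-η) • hx + (1 - μ) • hxy
  refine ⟨hy0, ?_⟩
  rw [← inv_smul_smul₀ (pow_ne_zero 2 hη) (S *ᵥ y), hSy, smul_smul, div_eq_inv_mul]

theorem Matrix.posSemidef_map_ofReal_mul_transpose {m n : Type*} [Fintype m] [Fintype n]
    (A : Matrix m n ℝ) : ((A * Aᵀ).map ((↑) : ℝ → ℂ)).PosSemidef := by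
  have hmap : (A * Aᵀ).map ((↑) : ℝ → ℂ) = A.map (↑) * (A.map (↑))ᴴ := by
    rw [← conjTranspose_map _ fun _ => (Complex.conj_ofReal _).symm]
    exact Matrix.map_mul (f := Complex.ofRealHom)
  rw [hmap]
  exact posSemidef_self_mul_conjTranspose _

theorem Matrix.PosSemidef.nonneg_of_mulVec_eq_smul {𝕜 n : Type*} [RCLike 𝕜] [Fintype n]
    {P : Matrix n n 𝕜} (hP : P.PosSemidef) {c : 𝕜} {y : n → 𝕜} (hy : y ≠ 0)
    (h : P *ᵥ y = c • y) : 0 ≤ c := by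
  have hcr := hP.dotProduct_mulVec_nonneg y
  rw [h, dotProduct_smul, smul_eq_mul] at hcr
  have hr := dotProduct_star_self_pos_iff.2 hy
  simpa [hr.ne'] using mul_nonneg hcr (RCLike.inv_pos_of_pos hr).le

theorem Matrix.exists_mulVec_eq_smul_of_map {K L n : Type*} [Field K] [Field L] [Fintype n]
    [DecidableEq n] (f : K →+* L) (S : Matrix n n K) (γ : K) {y : n → L} (hy : y ≠ 0)
    (h : S.map f *ᵥ y = f γ • y) : ∃ w : n → K, w ≠ 0 ∧ S *ᵥ w = γ • w := by
  have hdet : f (S - γ • 1).det = 0 := by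
    rw [RingHom.map_det, ← exists_mulVec_eq_zero_iff]
    refine ⟨y, hy, ?_⟩
    simp [map_sub, smul_one_eq_diagonal, sub_mulVec, h]
  obtain ⟨w, hw, hSw⟩ := exists_mulVec_eq_zero_iff.2 ((map_eq_zero f).1 hdet)
  exact ⟨w, hw, by rwa [sub_mulVec, smul_mulVec, one_mulVec, sub_eq_zero] at hSw⟩

theorem Complex.norm_one_add_sq_of_sq_eq_neg {z : ℂ} {t : ℝ} (ht : 0 ≤ t) (h : z ^ 2 = -t) :
    ‖1 + z‖ ^ 2 = 1 + t := by
  have hz : z.re = 0 := sq_nonpos_iff.1 (h ▸ neg_nonpos.2 (zero_le_real.2 ht))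
  have hre := congrArg re h
  simp only [pow_two, mul_re, hz, neg_re, ofReal_re] at hre
  rw [← normSq_eq_norm_sq, normSq_apply]
  simp only [add_re, one_re, add_im, one_im, hz]
  linarith

/-- Every complex eigenvalue `μ` of the Euler update matrix
`M = [[I, -η A Aᵀ],[η I, I]]` satisfies `(μ - 1)² + γ η² = 0` for some
eigenvalue `γ ≥ 0` of `A Aᵀ`, and hence `|μ|² = 1 + γ η² ≥ 1`. -/
theorem eigenvalue_euler_update_matrix (n : ℕ) (A : Matrix (Fin n) (Fin n) ℝ)
    (η : ℝ) (hη : 0 < η)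
    (M : Matrix (Fin n ⊕ Fin n) (Fin n ⊕ Fin n) ℝ)
    (hM : M = Matrix.fromBlocks 1 (-(η • (A * A.transpose)))
      (η • (1 : Matrix (Fin n) (Fin n) ℝ)) 1)
    (μ : ℂ) (v : (Fin n ⊕ Fin n) → ℂ) (hv : v ≠ 0)
    (h : (M.map (fun a => (a : ℂ))).mulVec v = μ • v) :
    ∃ γ : ℝ, (∃ w : Fin n → ℝ, w ≠ 0 ∧ (A * A.transpose).mulVec w = γ • w) ∧
      (μ - 1) ^ 2 + (γ : ℂ) * (η : ℂ) ^ 2 = 0 ∧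
      ‖μ‖ ^ 2 = 1 + γ * η ^ 2 ∧ 1 ≤ 1 + γ * η ^ 2 := by
  have hη0 : (η : ℂ) ≠ 0 := by exact_mod_cast hη.ne'
  have hM' : M.map (↑) = eulerUpdate (η : ℂ) ((A * Aᵀ).map (↑)) :=
    hM ▸ eulerUpdate_map Complex.ofRealHom η (A * Aᵀ)
  obtain ⟨hy, hSy⟩ := eulerUpdate_eigenvector_inr hη0 hv (hM' ▸ h)
  obtain ⟨γ, hγ, hγc⟩ := RCLike.nonneg_iff_exists_ofReal.1
    ((posSemidef_map_ofReal_mul_transpose A).nonneg_of_mulVec_eq_smul hy hSy)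
  replace hγc : (γ : ℂ) = -(μ - 1) ^ 2 / η ^ 2 := hγc
  have hμ : (μ - 1) ^ 2 + (γ : ℂ) * (η : ℂ) ^ 2 = 0 := by
    rw [hγc]
    field_simp
    ring
  have hγη : 0 ≤ γ * η ^ 2 := by positivity
  refine ⟨γ, exists_mulVec_eq_smul_of_map Complex.ofRealHom _ γ hy
    (by rw [Complex.ofRealHom_eq_coe, hγc]; exact hSy), hμ, ?_, by linarith⟩
  rw [← add_sub_cancel 1 μ]
  exact Complex.norm_one_add_sq_of_sq_eq_neg hγη (by push_cast; linear_combination hμ)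
end

section
/- Let A be a real n×n matrix, η > 0, and M_η = [[I, -η·A·Aᵀ],[η·I, I - η²·A·Aᵀ]] (the symplectic-Euler update matrix). Then det(μ·I - M_η) = ∏ᵢ (μ² - 2μ + 1 + μ·η²·γᵢ), where γ₁,…,γₙ are the eigenvalues of A·Aᵀ. -/
open Matrix

lemma det_fromBlocks_diagonal {n : ℕ} (a b c d : Fin n → ℂ) :
    (Matrix.fromBlocks (diagonal a) (diagonal b) (diagonal c) (diagonal d)).det
      = ∏ i : Fin n, (a i * d i - b i * c i) := by
  classical
  let e : Fin 2 × Fin n ≃ Fin n ⊕ Fin n :=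
    (finTwoEquiv.prodCongr (Equiv.refl (Fin n))).trans (Equiv.boolProdEquivSum (Fin n))
  have h : (Matrix.fromBlocks (diagonal a) (diagonal b) (diagonal c) (diagonal d)).submatrix e e
      = Matrix.blockDiagonal (fun i => !![a i, b i; c i, d i]) := by
    ext ⟨x, i⟩ ⟨y, j⟩
    fin_cases x <;> fin_cases y <;>
      simp [e, finTwoEquiv, Matrix.blockDiagonal_apply, diagonal_apply, eq_comm]
  have := Matrix.det_submatrix_equiv_self e
    (Matrix.fromBlocks (diagonal a) (diagonal b) (diagonal c) (diagonal d))
  rw [← this, h, Matrix.det_blockDiagonal]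
  refine Finset.prod_congr rfl fun i _ => ?_
  rw [Matrix.det_fin_two_of]

/-- The characteristic polynomial of the symplectic-Euler update matrix
`M_η = [[I, -η A Aᵀ],[η I, I - η² A Aᵀ]]` is
`det (μ I - M_η) = ∏ᵢ (μ² - 2 μ + 1 + μ η² γᵢ)`, where `γᵢ` are the
eigenvalues of `A Aᵀ`. -/
theorem charpoly_symplectic_euler_matrix (n : ℕ) (A : Matrix (Fin n) (Fin n) ℝ)
    (η : ℝ) (hη : 0 < η) (hA : (A * A.transpose).IsHermitian)
    (M : Matrix (Fin n ⊕ Fin n) (Fin n ⊕ Fin n) ℝ)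
    (hM : M = Matrix.fromBlocks 1 (-(η • (A * A.transpose)))
      (η • (1 : Matrix (Fin n) (Fin n) ℝ))
      (1 - (η ^ 2) • (A * A.transpose))) (μ : ℂ) :
    (μ • (1 : Matrix (Fin n ⊕ Fin n) (Fin n ⊕ Fin n) ℂ)
        - M.map (fun a => (a : ℂ))).det
      = ∏ i : Fin n, (μ ^ 2 - 2 * μ + 1 + μ * (η : ℂ) ^ 2 * (hA.eigenvalues i : ℂ)) := by
  classical
  set S := A * A.transpose with hSdef
  set g := hA.eigenvalues with hg
  set U := (hA.eigenvectorUnitary : Matrix (Fin n) (Fin n) ℝ) with hU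
  have hspec : S = U * diagonal (RCLike.ofReal ∘ g) * star U := hA.spectral_theorem
  have hUW : U * star U = 1 := (Matrix.mem_unitaryGroup_iff).mp hA.eigenvectorUnitary.2
  have hWU : star U * U = 1 := (Matrix.mem_unitaryGroup_iff').mp hA.eigenvectorUnitary.2
  -- complexifications
  set f : ℝ →+* ℂ := Complex.ofRealHom with hf
  set V := U.map f with hV
  set W := (star U).map f with hW
  have hVW : V * W = 1 := by rw [hV, hW, ← Matrix.map_mul, hUW, Matrix.map_one f f.map_zero f.map_one]
  have hdiag : (diagonal (RCLike.ofReal ∘ g)).map f = diagonal (fun i => (g i : ℂ)) := by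
    rw [Matrix.diagonal_map f.map_zero]
    congr 1
  have hSc : S.map f = V * diagonal (fun i => (g i : ℂ)) * W := by
    rw [hspec, Matrix.map_mul, Matrix.map_mul, hdiag]
  -- the block matrix equality
  set P := Matrix.fromBlocks V 0 0 V with hP
  set Q := Matrix.fromBlocks W 0 0 W with hQ
  set Z := Matrix.fromBlocks (diagonal (fun _ : Fin n => μ - 1))
      (diagonal (fun i => (η : ℂ) * (g i : ℂ)))
      (diagonal (fun _ : Fin n => -(η : ℂ)))
      (diagonal (fun i => (μ - 1) + (η : ℂ) ^ 2 * (g i : ℂ))) with hZ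
  have key : μ • (1 : Matrix (Fin n ⊕ Fin n) (Fin n ⊕ Fin n) ℂ)
      - M.map (fun a => (a : ℂ)) = P * Z * Q := by
    have hmap : M.map (fun a => (a : ℂ)) = M.map f := rfl
    rw [hmap, hM, Matrix.fromBlocks_map, ← Matrix.fromBlocks_one (l := Fin n) (m := Fin n),
      Matrix.fromBlocks_smul, hP, hQ, hZ, Matrix.fromBlocks_multiply, Matrix.fromBlocks_multiply]
    simp only [Matrix.mul_zero, Matrix.zero_mul, add_zero, zero_add]
    have hconst : ∀ c : ℂ, V * diagonal (fun _ : Fin n => c) * W = c • 1 := by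
      intro c
      rw [show (diagonal (fun _ : Fin n => c)) = c • (1 : Matrix (Fin n) (Fin n) ℂ) by
        ext i j; by_cases h : i = j <;> simp [diagonal_apply, Matrix.one_apply, h]]
      rw [Matrix.mul_smul, Matrix.smul_mul, Matrix.mul_one, hVW]
    have h12 : V * diagonal (fun i => (η : ℂ) * (g i : ℂ)) * W = (η : ℂ) • (S.map f) := by
      rw [show (diagonal fun i => (η : ℂ) * (g i : ℂ)) = (η : ℂ) • diagonal (fun i => (g i : ℂ)) by
        ext i j; by_cases h : i = j <;> simp [diagonal_apply, h]]
      rw [Matrix.mul_smul, Matrix.smul_mul, hSc]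
    have h22 : V * diagonal (fun i => (μ - 1) + (η : ℂ) ^ 2 * (g i : ℂ)) * W
        = (μ - 1) • 1 + (η : ℂ) ^ 2 • (S.map f) := by
      rw [show (diagonal fun i => (μ - 1) + (η : ℂ) ^ 2 * (g i : ℂ))
          = diagonal (fun _ : Fin n => μ - 1) + (η : ℂ) ^ 2 • diagonal (fun i => (g i : ℂ)) by
        ext i j; by_cases h : i = j <;> simp [diagonal_apply, h]]
      rw [Matrix.mul_add, Matrix.add_mul, hconst, Matrix.mul_smul, Matrix.smul_mul, hSc]
    rw [hconst, hconst, h12, h22]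
    ext (i | i) (j | j) <;>
      simp [f, Matrix.fromBlocks, Matrix.map_apply, Matrix.smul_apply, Matrix.sub_apply,
        Matrix.one_apply, Matrix.add_apply, Matrix.neg_apply, mul_comm] <;>
      split <;> push_cast <;> ring
  rw [key, Matrix.det_mul, Matrix.det_mul, mul_comm, ← mul_assoc, ← Matrix.det_mul, hQ, hP,
    Matrix.fromBlocks_multiply]
  simp only [Matrix.mul_zero, Matrix.zero_mul, add_zero, zero_add]
  have hWV : W * V = 1 := by rw [hV, hW, ← Matrix.map_mul, hWU, Matrix.map_one f f.map_zero f.map_one]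
  rw [hWV, Matrix.fromBlocks_one, Matrix.det_one, one_mul, hZ, det_fromBlocks_diagonal]
  refine Finset.prod_congr rfl fun i _ => ?_
  ring
end

section
/- Let A be a real n×n matrix, η > 0 with η²·‖A·Aᵀ‖ ≤ 2, and M_η = [[I, -η·A·Aᵀ],[η·I, I - η²·A·Aᵀ]]. Then every complex non-real eigenvalue of M_η has absolute value 1, and the only possible real eigenvalue is 1, which occurs iff A·Aᵀ is singular. -/
/-!
Write an eigenvector of `M_η` as `(x, y)` and put `S = A Aᵀ`. The two block rows say
`η S y = (1 - μ) x` and `η μ x = (μ - 1) y`, so for `μ ≠ 1` the vector `y` is nonzero and is an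
eigenvector of `S` whose eigenvalue `s` satisfies `μ² + (η² s - 2) μ + 1 = 0`. As `S` is positive
semidefinite, `s` is real with `0 ≤ s ≤ ‖S‖`, so the real coefficient `b = η² s - 2` lies in
`[-2, 0]`. The roots of `μ² + b μ + 1` are then either conjugate with product `1`, or real, which
forces `b = -2` and `μ = 1`. For `μ = 1` the block rows reduce to `x = 0` and `S y = 0`.
-/

open scoped Matrix.Norms.L2Operator ComplexOrder

namespace Matrix

variable {n : Type*}

section

variable [Fintype n]

theorem exists_mulVec_map_eq_zero_iff [DecidableEq n] {K L : Type*} [Field K] [Field L]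
    (f : K →+* L) (M : Matrix n n K) :
    (∃ v ≠ 0, M.map f *ᵥ v = 0) ↔ ∃ v ≠ 0, M *ᵥ v = 0 := by
  rw [exists_mulVec_eq_zero_iff, exists_mulVec_eq_zero_iff, ← RingHom.mapMatrix_apply,
    ← f.map_det, map_eq_zero]

theorem exists_mulVec_map_eq_smul_iff [DecidableEq n] {K L : Type*} [Field K] [Field L]
    (f : K →+* L) (M : Matrix n n K) (r : K) :
    (∃ v ≠ 0, M.map f *ᵥ v = f r • v) ↔ ∃ v ≠ 0, M *ᵥ v = r • v := by
  have hmap : (M - r • 1).map f = M.map f - f r • 1 := by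
    ext i j
    by_cases hij : i = j <;> simp [hij]
  have key := exists_mulVec_map_eq_zero_iff f (M - r • 1)
  rw [hmap] at key
  simpa only [sub_mulVec, smul_mulVec, one_mulVec, sub_eq_zero] using key

theorem norm_le_l2_opNorm_of_mulVec_eq_smul [DecidableEq n] {𝕜 : Type*} [RCLike 𝕜]
    {S : Matrix n n 𝕜} {u : n → 𝕜} (hu : u ≠ 0) {c : 𝕜} (h : S *ᵥ u = c • u) :
    ‖c‖ ≤ ‖S‖ := by
  have hbound := S.l2_opNorm_mulVec (WithLp.toLp 2 u)
  have hu_pos : 0 < ‖WithLp.toLp 2 u‖ := by simpa using hu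
  simp only [h, map_smul, PiLp.continuousLinearEquiv_symm_apply, norm_smul] at hbound
  exact le_of_mul_le_mul_right hbound hu_pos

theorem PosSemidef.nonneg_of_mulVec_eq_smul_s16 {𝕜 : Type*} [RCLike 𝕜] {S : Matrix n n 𝕜}
    (hS : S.PosSemidef) {y : n → 𝕜} (hy : y ≠ 0) {c : 𝕜} (h : S *ᵥ y = c • y) : 0 ≤ c := by
  have hquad := hS.dotProduct_mulVec_nonneg y
  rw [h, dotProduct_smul, smul_eq_mul] at hquad
  have hpos : 0 < star y ⬝ᵥ y := dotProduct_star_self_pos_iff.2 hy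
  simpa [hpos.ne'] using mul_nonneg hquad (RCLike.inv_pos.2 hpos).le

theorem map_ofReal_mul_transpose {m : Type*} (A : Matrix m n ℝ) :
    (A * Aᵀ).map Complex.ofReal = A.map Complex.ofReal * (A.map Complex.ofReal)ᴴ := by
  rw [show (Complex.ofReal : ℝ → ℂ) = Complex.ofRealHom from rfl, Matrix.map_mul]
  congr 1
  ext i j
  simp

theorem exists_eq_ofReal_of_map_mul_transpose_mulVec_eq_smul {m : Type*} [Fintype m]
    [DecidableEq m] (A : Matrix m n ℝ) {y : m → ℂ} (hy : y ≠ 0) {c : ℂ}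
    (h : (A * Aᵀ).map Complex.ofReal *ᵥ y = c • y) :
    ∃ r : ℝ, c = r ∧ 0 ≤ r ∧ r ≤ ‖A * Aᵀ‖ := by
  have hpsd : ((A * Aᵀ).map Complex.ofReal).PosSemidef := by
    rw [map_ofReal_mul_transpose]
    exact posSemidef_self_mul_conjTranspose _
  obtain ⟨hre, him⟩ := Complex.nonneg_iff.1 (hpsd.nonneg_of_mulVec_eq_smul_s16 hy h)
  have hc : c = (c.re : ℂ) := Complex.ext rfl (by simp [← him])
  rw [hc] at h
  obtain ⟨u, hu, hSu⟩ :=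
    (exists_mulVec_map_eq_smul_iff Complex.ofRealHom (A * Aᵀ) c.re).1 ⟨y, hy, h⟩
  refine ⟨c.re, hc, hre, (le_abs_self _).trans ?_⟩
  simpa using norm_le_l2_opNorm_of_mulVec_eq_smul hu hSu

end

section SymplecticEuler

variable [DecidableEq n] {R : Type*} [CommRing R]

def symplecticEuler (η : R) (S : Matrix n n R) : Matrix (n ⊕ n) (n ⊕ n) R :=
  fromBlocks 1 (-(η • S)) (η • 1) (1 - η ^ 2 • S)

theorem symplecticEuler_map {R' : Type*} [CommRing R'] (f : R →+* R') (η : R)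
    (S : Matrix n n R) : (symplecticEuler η S).map f = symplecticEuler (f η) (S.map f) := by
  simp only [symplecticEuler, fromBlocks_map]
  congr 1 <;> ext i j <;> by_cases hij : i = j <;> simp [hij, one_apply]

variable [Fintype n]

theorem symplecticEuler_mulVec_elim_eq_smul_iff (η μ : R) (S : Matrix n n R) (x y : n → R) :
    symplecticEuler η S *ᵥ Sum.elim x y = μ • Sum.elim x y ↔
      η • (S *ᵥ y) = (1 - μ) • x ∧ (η * μ) • x = (μ - 1) • y := by
  have hsmul : μ • Sum.elim x y = Sum.elim (μ • x) (μ • y) := by ext (i | i) <;> rfl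
  simp only [symplecticEuler, fromBlocks_mulVec, Sum.elim_comp_inl, Sum.elim_comp_inr, hsmul,
    Sum.elim_eq_iff, one_mulVec, neg_mulVec, smul_mulVec, sub_mulVec]
  constructor
  · rintro ⟨h₁, h₂⟩
    exact ⟨by linear_combination (norm := module) -h₁,
      by linear_combination (norm := module) h₂ - η • h₁⟩
  · rintro ⟨h₁, h₂⟩
    exact ⟨by linear_combination (norm := module) -h₁,
      by linear_combination (norm := module) h₂ - η • h₁⟩

variable {K : Type*} [Field K] {η : K} (hη : η ≠ 0) (S : Matrix n n K)
include hη

theorem exists_symplecticEuler_mulVec_eq_self_iff :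
    (∃ v, v ≠ 0 ∧ symplecticEuler η S *ᵥ v = v) ↔ S.det = 0 := by
  rw [← exists_mulVec_eq_zero_iff]
  have key (x y : n → K) :
      symplecticEuler η S *ᵥ Sum.elim x y = Sum.elim x y ↔ x = 0 ∧ S *ᵥ y = 0 := by
    have h := symplecticEuler_mulVec_elim_eq_smul_iff η 1 S x y
    rw [one_smul] at h
    simp [h, hη, and_comm]
  constructor
  · rintro ⟨v, hv, hMv⟩
    obtain ⟨x, y, rfl⟩ : ∃ x y, v = Sum.elim x y :=
      ⟨v ∘ Sum.inl, v ∘ Sum.inr, (Sum.elim_comp_inl_inr v).symm⟩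
    obtain ⟨rfl, hSy⟩ := (key x y).1 hMv
    exact ⟨y, fun hy => hv (by rw [hy, Sum.elim_zero_zero]), hSy⟩
  · rintro ⟨y, hy, hSy⟩
    refine ⟨Sum.elim 0 y, fun h => hy ?_, (key 0 y).2 ⟨rfl, hSy⟩⟩
    simpa using congrArg (· ∘ Sum.inr) h

theorem exists_mulVec_eq_smul_of_symplecticEuler_mulVec_eq_smul {μ : K} (hμ : μ ≠ 1)
    {v : n ⊕ n → K} (hv : v ≠ 0) (h : symplecticEuler η S *ᵥ v = μ • v) :
    ∃ y ≠ 0, ∃ c, S *ᵥ y = c • y ∧ μ ^ 2 + (η ^ 2 * c - 2) * μ + 1 = 0 := by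
  obtain ⟨x, y, rfl⟩ : ∃ x y, v = Sum.elim x y :=
    ⟨v ∘ Sum.inl, v ∘ Sum.inr, (Sum.elim_comp_inl_inr v).symm⟩
  obtain ⟨h₁, h₂⟩ := (symplecticEuler_mulVec_elim_eq_smul_iff η μ S x y).1 h
  have hy : y ≠ 0 := by
    rintro rfl
    have hx : x = 0 := by simpa [sub_eq_zero, Ne.symm hμ] using h₁.symm
    exact hv (by rw [hx, Sum.elim_zero_zero])
  have hμ₀ : μ ≠ 0 := by
    rintro rfl
    simp [hy] at h₂
  have hSy : (η ^ 2 * μ) • (S *ᵥ y) = (-(μ - 1) ^ 2) • y := by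
    linear_combination (norm := module) (η * μ) • h₁ + (1 - μ) • h₂
  have hden : η ^ 2 * μ ≠ 0 := by positivity
  refine ⟨y, hy, -(μ - 1) ^ 2 / (η ^ 2 * μ), ?_, by field_simp; ring⟩
  rw [div_eq_inv_mul, mul_smul, ← hSy, inv_smul_smul₀ hden]

end SymplecticEuler

end Matrix

namespace Complex

theorem norm_eq_one_of_sq_add_mul_add_one_eq_zero {μ : ℂ} {b : ℝ}
    (h : μ ^ 2 + b * μ + 1 = 0) (him : μ.im ≠ 0) : ‖μ‖ = 1 := by
  have hre := congrArg re h
  have him' := congrArg im h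
  simp only [pow_two, add_re, mul_re, ofReal_re, ofReal_im, one_re, zero_re, add_im, mul_im,
    one_im, zero_im] at hre him'
  have hb : 2 * μ.re + b = 0 := by
    refine (mul_eq_zero.1 (?_ : (2 * μ.re + b) * μ.im = 0)).resolve_right him
    linear_combination him'
  rw [norm_def, normSq_apply, Real.sqrt_eq_one]
  linear_combination μ.re * hb - hre

theorem eq_one_of_sq_add_mul_add_one_eq_zero {μ : ℂ} {b : ℝ} (hb₁ : -2 ≤ b) (hb₂ : b < 2)
    (h : μ ^ 2 + b * μ + 1 = 0) (him : μ.im = 0) : μ = 1 := by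
  have hre := congrArg re h
  simp only [pow_two, add_re, mul_re, ofReal_re, ofReal_im, one_re, zero_re, him] at hre
  have hsq : (2 * μ.re + b) ^ 2 = (b - 2) * (b + 2) := by linear_combination 4 * hre
  obtain rfl : b = -2 := by nlinarith [sq_nonneg (2 * μ.re + b)]
  have hre_one : μ.re = 1 := by nlinarith
  exact Complex.ext hre_one him

end Complex

/-- For the symplectic-Euler update matrix `M_η = [[I, -η A Aᵀ],[η I, I - η² A Aᵀ]]`
with `η² ‖A Aᵀ‖ ≤ 2` (spectral norm): every non-real complex eigenvalue of `M_η`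
has absolute value `1`; the only possible real eigenvalue is `1`; and `1` is an
eigenvalue iff `A Aᵀ` is singular. -/
theorem eigenvalues_symplectic_euler_matrix (n : ℕ) (A : Matrix (Fin n) (Fin n) ℝ)
    (η : ℝ) (hη : 0 < η) (hnorm : η ^ 2 * ‖A * A.transpose‖ ≤ 2)
    (M : Matrix (Fin n ⊕ Fin n) (Fin n ⊕ Fin n) ℝ)
    (hM : M = Matrix.fromBlocks 1 (-(η • (A * A.transpose)))
      (η • (1 : Matrix (Fin n) (Fin n) ℝ))
      (1 - (η ^ 2) • (A * A.transpose))) :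
    (∀ (μ : ℂ) (v : (Fin n ⊕ Fin n) → ℂ), v ≠ 0 →
        (M.map (fun a => (a : ℂ))).mulVec v = μ • v →
          (μ.im ≠ 0 → ‖μ‖ = 1) ∧ (μ.im = 0 → μ = 1)) ∧
      ((∃ v : (Fin n ⊕ Fin n) → ℝ, v ≠ 0 ∧ M.mulVec v = v) ↔
        (A * A.transpose).det = 0) := by
  obtain rfl : M = Matrix.symplecticEuler η (A * A.transpose) := hM
  refine ⟨fun μ v hv hMv => ?_, Matrix.exists_symplecticEuler_mulVec_eq_self_iff hη.ne' _⟩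
  by_cases hμ : μ = 1
  · simp [hμ]
  rw [show (Matrix.symplecticEuler η (A * A.transpose)).map (fun a => (a : ℂ)) =
      Matrix.symplecticEuler (η : ℂ) ((A * A.transpose).map Complex.ofReal) from
    Matrix.symplecticEuler_map Complex.ofRealHom _ _] at hMv
  obtain ⟨y, hy, c, hSy, hquad⟩ :=
    Matrix.exists_mulVec_eq_smul_of_symplecticEuler_mulVec_eq_smul
      (Complex.ofReal_ne_zero.2 hη.ne') _ hμ hv hMv
  obtain ⟨r, rfl, hr₀, hr⟩ :=
    Matrix.exists_eq_ofReal_of_map_mul_transpose_mulVec_eq_smul A hy hSy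
  have hquad' : μ ^ 2 + ((η ^ 2 * r - 2 : ℝ) : ℂ) * μ + 1 = 0 := by push_cast; exact hquad
  have hηr : η ^ 2 * r ≤ 2 := (mul_le_mul_of_nonneg_left hr (sq_nonneg η)).trans hnorm
  exact ⟨Complex.norm_eq_one_of_sq_add_mul_add_one_eq_zero hquad',
    Complex.eq_one_of_sq_add_mul_add_one_eq_zero
      (by linarith [mul_nonneg (sq_nonneg η) hr₀]) (by linarith) hquad'⟩
end

section
/- Let A be a real n×n matrix, η > 0, and M_η = [[I, -η·A·Aᵀ],[η·I, I - η²·A·Aᵀ]]. If (x,y) ∈ ℝ^{2n} satisfies (M_η - I)²(x,y) = 0 then A·Aᵀ·x = 0 and A·Aᵀ·y = 0. -/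
/-- For the symplectic-Euler update matrix `M_η = [[I, -η A Aᵀ],[η I, I - η² A Aᵀ]]`:
if `(M_η - I)² (x,y) = 0` then `A Aᵀ x = 0` and `A Aᵀ y = 0`. -/
theorem symplectic_euler_generalized_kernel (n : ℕ) (A : Matrix (Fin n) (Fin n) ℝ)
    (η : ℝ) (hη : 0 < η)
    (M : Matrix (Fin n ⊕ Fin n) (Fin n ⊕ Fin n) ℝ)
    (hM : M = Matrix.fromBlocks 1 (-(η • (A * A.transpose)))
      (η • (1 : Matrix (Fin n) (Fin n) ℝ))
      (1 - (η ^ 2) • (A * A.transpose)))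
    (x y : Fin n → ℝ)
    (h : ((M - 1) * (M - 1)).mulVec (Sum.elim x y) = 0) :
    (A * A.transpose).mulVec x = 0 ∧ (A * A.transpose).mulVec y = 0 := by
  set S := A * A.transpose with hS
  have hMsub : M - 1 = Matrix.fromBlocks 0 (-(η • S)) (η • 1) (-((η^2) • S)) := by
    rw [hM, sub_eq_add_neg, ← Matrix.fromBlocks_one, Matrix.fromBlocks_neg,
      Matrix.fromBlocks_add]
    congr 1 <;> abel_nf <;> simp
  rw [hMsub, Matrix.fromBlocks_multiply, Matrix.fromBlocks_mulVec] at h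
  simp only [Sum.elim_comp_inl, Sum.elim_comp_inr, Matrix.zero_mul, Matrix.mul_zero,
    zero_add, add_zero, Matrix.neg_mul, Matrix.mul_neg, neg_neg, Matrix.smul_mul,
    Matrix.mul_smul, Matrix.one_mul, Matrix.mul_one, smul_smul, Matrix.neg_mulVec,
    Matrix.smul_mulVec, ← Matrix.mulVec_mulVec] at h
  have E1 := congrArg (· ∘ Sum.inl) h
  have E2 := congrArg (· ∘ Sum.inr) h
  simp only [Sum.elim_comp_inl, Sum.elim_comp_inr] at E1 E2
  set u := S.mulVec x with hu
  set v := S.mulVec y with hv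
  simp only [smul_zero, neg_zero, zero_add, neg_neg, smul_smul, Matrix.add_mulVec,
    Matrix.neg_mulVec, Matrix.smul_mulVec, ← Matrix.mulVec_mulVec, smul_neg,
    Function.comp_def, Pi.zero_apply, Pi.zero_comp] at E1 E2
  rw [← hv] at E1 E2
  have E1' : -((η * η) • u) + (η ^ 2 * η) • S.mulVec v = 0 := E1
  have E2' : -((η * η ^ 2) • u) + (-((η * η) • v) + (η ^ 2 * η ^ 2) • S.mulVec v) = 0 := E2
  have hv0 : v = 0 := by
    have h3 : (η * η) • v = 0 := by
      linear_combination (norm := module) η • E1' - E2'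
    have hne : (η * η) ≠ 0 := by positivity
    simpa [hne] using h3
  have hSv : S.mulVec v = 0 := by rw [hv0, Matrix.mulVec_zero]
  have hu0 : u = 0 := by
    rw [hSv, smul_zero, add_zero] at E1'
    have h4 : (η * η) • u = 0 := by
      rw [← neg_eq_zero]; exact E1'
    have hne : (η * η) ≠ 0 := by positivity
    simpa [hne] using h4
  exact ⟨hu0, hv0⟩
end
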